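/- Let C be a category and W a class of morphisms of C. Then: (i) on the objects of Fun^W(ℕ,C), the assignment Hom(C,D) := { pairs (k,φ) with k ∈ ℕ and φ : C → T^{k,*}D in Fun^W(ℕ,C) } / ∼, where ∼ is generated by (k,φ) ∼ (k+1, v_{T^{k,*}D} ∘ φ), together with the composition [k,φ] ∘ [k',φ'] := [k + k', T^{k',*}(φ) ∘ φ'], is well defined (independent of representatives), associative and unital, yielding a category Fun^W_shift(ℕ,C); (ii) the functor ℓ_V : Fun^W(ℕ,C) → Fun^W_shift(ℕ,C), which is the identity on objects and sends φ to [0,φ], inverts every morphism in V := { v_C : C ∈ Fun^W(ℕ,C) } and exhibits Fun^W_shift(ℕ,C) as the localization of Fun^W(ℕ,C) at V (in ordinary category theory). -/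

import Mathlib

/-!
Statement 3: the shift category `Fun^W_shift(ℕ,C)`.

Objects are the objects of `Fun^W(ℕ,C)`; morphisms `X → Y` are equivalence classes `[k,φ]` of
pairs `(k, φ : X ⟶ T^{k,*}Y)` under the relation generated by `(k,φ) ∼ (k+1, v_{T^{k,*}Y} ∘ φ)`.
The theorem asserts:
(i) the composition `[k,φ] ∘ [k',φ'] = [k+k', T^{k',*}(φ)∘φ']` is well defined,
    associative and unital;
(ii) the identity-on-objects functor `ℓ_V : φ ↦ [0,φ]` inverts every morphism of
     `V = { v_C }` and exhibits the shift category as the localization of `Fun^W(ℕ,C)` at `V`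
     (expressed by the 1-categorical universal property of the localization).
-/

open CategoryTheory

universe v u v₂ u₂

namespace ShiftCat

variable {C : Type u} [Category.{v} C] {W : MorphismProperty C}

abbrev WSeq (W : MorphismProperty C) :=
  ObjectProperty.FullSubcategory (fun F : ℕ ⥤ C => ∀ n : ℕ, W (F.map (homOfLE (Nat.le_succ n))))

lemma natHom_eq {a b : ℕ} (f g : a ⟶ b) : f = g := Subsingleton.elim f g

def shObj (k : ℕ) (F : WSeq W) : WSeq W where
  obj :=
    { obj := fun n => F.obj.obj (n + k)
      map := fun {a b} f => F.obj.map (homOfLE (Nat.add_le_add_right (leOfHom f) k))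
      map_id := fun n =>
        (congrArg F.obj.map (natHom_eq _ (𝟙 (n + k)))).trans (F.obj.map_id _)
      map_comp := fun {a b c} f g =>
        (congrArg F.obj.map (natHom_eq _ (homOfLE (Nat.add_le_add_right (leOfHom f) k) ≫
          homOfLE (Nat.add_le_add_right (leOfHom g) k)))).trans (F.obj.map_comp _ _) }
  property := fun n => by
    have h : ∀ {x y : ℕ} (p : x ≤ y), y = x + 1 → W (F.obj.map (homOfLE p)) := by
      intro x y p hy; subst hy; exact F.property x
    exact h _ (by omega)

def vpow (k : ℕ) (F : WSeq W) : F ⟶ shObj k F where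
  hom :=
    { app n := F.obj.map (homOfLE (Nat.le_add_right n k))
      naturality a b f := by
        show F.obj.map _ ≫ F.obj.map _ = F.obj.map _ ≫ F.obj.map _
        rw [← F.obj.map_comp, ← F.obj.map_comp]
        exact congrArg F.obj.map (natHom_eq _ _) }

/-- The canonical morphism `v_{T^{k,*}D} : T^{k,*}D ⟶ T^{k+1,*}D`. -/
def vstep (k : ℕ) (F : WSeq W) : shObj k F ⟶ shObj (k + 1) F where
  hom :=
    { app n := F.obj.map (homOfLE (by omega : n + k ≤ n + (k + 1)))
      naturality a b f := by
        show F.obj.map _ ≫ F.obj.map _ = F.obj.map _ ≫ F.obj.map _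
        rw [← F.obj.map_comp, ← F.obj.map_comp]
        exact congrArg F.obj.map (natHom_eq _ _) }

def Pre (X Y : WSeq W) := Σ k : ℕ, (X ⟶ shObj k Y)

def stepRel (X Y : WSeq W) : Pre X Y → Pre X Y → Prop :=
  fun a b => b = ⟨a.1 + 1, a.2 ≫ vstep a.1 Y⟩

def SH (X Y : WSeq W) := Quot (stepRel X Y)

def lmk {X Y : WSeq W} (φ : X ⟶ Y) : SH X Y := Quot.mk _ ⟨0, φ⟩

lemma squash (Fc : ℕ ⥤ C) {x x' y y' : ℕ} (hx : x = x') (hy : y = y') (p : x ≤ y) (q : x' ≤ y') :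
    Fc.map (homOfLE p) ≫ eqToHom (congrArg Fc.obj hy) =
      eqToHom (congrArg Fc.obj hx) ≫ Fc.map (homOfLE q) := by
  subst hx; subst hy
  rw [eqToHom_refl, eqToHom_refl, Category.comp_id, Category.id_comp]

/-- `T^{m,*}(ψ)` followed by the canonical identification `T^{m,*}T^{k,*} = T^{(k+m),*}`. -/
def shMap (m : ℕ) {Y Z : WSeq W} {k : ℕ} (ψ : Y ⟶ shObj k Z) :
    shObj m Y ⟶ shObj (k + m) Z where
  hom :=
    { app n := ψ.hom.app (n + m) ≫ eqToHom (congrArg Z.obj.obj (by omega : (n + m) + k = n + (k + m)))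
      naturality a b f := by
        show Y.obj.map (homOfLE _) ≫ ψ.hom.app (b + m) ≫ eqToHom _ =
          (ψ.hom.app (a + m) ≫ eqToHom _) ≫ Z.obj.map (homOfLE _)
        rw [← Category.assoc, ψ.hom.naturality (homOfLE (Nat.add_le_add_right (leOfHom f) m))]
        show (ψ.hom.app (a + m) ≫ Z.obj.map (homOfLE _)) ≫ _ = _
        rw [Category.assoc]
        refine (Category.assoc _ _ _).trans (congrArg _ ?_)
        exact squash Z.obj (by omega) (by omega) _ _ }

/-- Composition on representatives: `[k,φ] ∘ [k',φ'] = [k+k', T^{k',*}(φ) ∘ φ']`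
(written diagrammatically: `a = (k',φ') : X → Y` followed by `b = (k,φ) : Y → Z`). -/
def preComp {X Y Z : WSeq W} (a : Pre X Y) (b : Pre Y Z) : Pre X Z :=
  ⟨b.1 + a.1, a.2 ≫ shMap a.1 b.2⟩

end ShiftCat

namespace ShiftCat

open ShiftCat

/-
A class `[k, φ]` is the fraction `ℓ(v^k)⁻¹ ∘ ℓ(φ)`. Two representatives are compared by
pushing both along the maps `v` to a common level `N`; afterwards every identity needed
(well-definedness, associativity, unitality, invertibility of `ℓ(v)`) is an equality of
components built from the structure maps of a single functor out of the poset `ℕ`, where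
parallel morphisms agree. The same fraction formula defines the extension of a functor
inverting `V` and forces its uniqueness.
-/

variable {C : Type u} [Category.{v} C] {W : MorphismProperty C}

-- Lets `simp` identify `(shObj k F).obj.obj n` with `F.obj.obj (n + k)` when matching composites.
attribute [reducible] shObj

lemma eqToHom_eq_map_homOfLE (F : ℕ ⥤ C) {a b : ℕ} (h : a = b) (h' : F.obj a = F.obj b) :
    eqToHom h' = F.map (homOfLE h.le) := by
  subst h; simp

@[ext]
lemma WSeq.hom_ext {X Y : WSeq W} {f g : X ⟶ Y} (h : ∀ n, f.hom.app n = g.hom.app n) : f = g :=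
  ObjectProperty.hom_ext _ (NatTrans.ext (funext h))

@[simp]
lemma WSeq.comp_app {X Y Z : WSeq W} (f : X ⟶ Y) (g : Y ⟶ Z) (n : ℕ) :
    (f ≫ g).hom.app n = f.hom.app n ≫ g.hom.app n := rfl

@[simp]
lemma WSeq.id_app (X : WSeq W) (n : ℕ) : (𝟙 X : X ⟶ X).hom.app n = 𝟙 (X.obj.obj n) := rfl

@[simp]
lemma shObj_map (k : ℕ) (F : WSeq W) {a b : ℕ} (f : a ⟶ b) :
    (shObj k F).obj.map f = F.obj.map (homOfLE (Nat.add_le_add_right (leOfHom f) k)) := rfl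

@[simp]
lemma vpow_app (k : ℕ) (F : WSeq W) (n : ℕ) :
    (vpow k F).hom.app n = F.obj.map (homOfLE (Nat.le_add_right n k)) := rfl

@[simp]
lemma vstep_app (k : ℕ) (F : WSeq W) (n : ℕ) :
    (vstep k F).hom.app n = F.obj.map (homOfLE (by omega : n + k ≤ n + (k + 1))) := rfl

@[simp]
lemma shMap_app (m : ℕ) {Y Z : WSeq W} {k : ℕ} (ψ : Y ⟶ shObj k Z) (n : ℕ) :
    (shMap m ψ).hom.app n =
      ψ.hom.app (n + m) ≫ Z.obj.map (homOfLE (by omega : n + m + k ≤ n + (k + m))) :=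
  congrArg _ (eqToHom_eq_map_homOfLE Z.obj (by omega) _)

/-- `v^{N-j}` at `T^{j,*}F`. -/
def vOfLE {j N : ℕ} (h : j ≤ N) (F : WSeq W) : shObj j F ⟶ shObj N F where
  hom :=
    { app n := F.obj.map (homOfLE (by omega : n + j ≤ n + N))
      naturality a b f := by simp [← Functor.map_comp] }

@[simp]
lemma vOfLE_app {j N : ℕ} (h : j ≤ N) (F : WSeq W) (n : ℕ) :
    (vOfLE h F).hom.app n = F.obj.map (homOfLE (by omega : n + j ≤ n + N)) := rfl

lemma vOfLE_refl (j : ℕ) (F : WSeq W) : vOfLE (le_refl j) F = 𝟙 _ := by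
  ext n; simp

lemma vOfLE_comp_vstep {j N : ℕ} (h : j ≤ N) (F : WSeq W) :
    vOfLE h F ≫ vstep N F = vOfLE (h.trans N.le_succ) F := by
  ext n; simp [← Functor.map_comp]

lemma vpow_zero (F : WSeq W) : vpow 0 F = 𝟙 F := by
  ext n; simp

lemma vpow_succ (k : ℕ) (F : WSeq W) :
    vpow (k + 1) F = vpow 1 F ≫ (vpow k (shObj 1 F) : shObj 1 F ⟶ shObj (k + 1) F) := by
  ext n; simp [← Functor.map_comp]

lemma vpow_comp_vstep (k : ℕ) (F : WSeq W) : vpow k F ≫ vstep k F = vpow (k + 1) F := by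
  ext n; simp [← Functor.map_comp]

lemma vpow_comp_vOfLE {k N : ℕ} (h : k ≤ N) (F : WSeq W) :
    vpow k F ≫ vOfLE h F = vpow N F := by
  ext n; simp [← Functor.map_comp]

lemma comp_vOfLE_eq_vpow_comp_shMap {Y Z : WSeq W} {k : ℕ} (φ : Y ⟶ shObj k Z) (m : ℕ) :
    φ ≫ vOfLE (k.le_add_right m) Z = vpow m Y ≫ shMap m φ := by
  ext n; simp [← Functor.map_comp]

lemma mk_eq_mk_comp_vOfLE {X Y : WSeq W} {j N : ℕ} (h : j ≤ N) (φ : X ⟶ shObj j Y) :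
    Quot.mk (stepRel X Y) ⟨j, φ⟩ = Quot.mk (stepRel X Y) ⟨N, φ ≫ vOfLE h Y⟩ := by
  induction N, h using Nat.le_induction with
  | base => rw [vOfLE_refl, Category.comp_id]
  | succ N h ih =>
    rw [ih, ← vOfLE_comp_vstep h, ← Category.assoc]
    exact Quot.sound rfl

lemma mk_eq_mk_of_app {X Y : WSeq W} {k m N : ℕ} (φ : X ⟶ shObj k Y) (ψ : X ⟶ shObj m Y)
    (hk : k ≤ N) (hm : m ≤ N)
    (h : ∀ n, φ.hom.app n ≫ Y.obj.map (homOfLE (by omega : n + k ≤ n + N)) =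
      ψ.hom.app n ≫ Y.obj.map (homOfLE (by omega : n + m ≤ n + N))) :
    Quot.mk (stepRel X Y) ⟨k, φ⟩ = Quot.mk (stepRel X Y) ⟨m, ψ⟩ := by
  rw [mk_eq_mk_comp_vOfLE hk, mk_eq_mk_comp_vOfLE hm]
  congr 2
  ext n
  exact h n

lemma mk_preComp_of_stepRel_right {X Y Z : WSeq W} (a : Pre X Y) (b b' : Pre Y Z)
    (h : stepRel Y Z b b') :
    Quot.mk (stepRel X Z) (preComp a b) = Quot.mk (stepRel X Z) (preComp a b') := by
  obtain ⟨k', φ'⟩ := a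
  obtain ⟨k, φ⟩ := b
  subst h
  dsimp only [preComp]
  refine mk_eq_mk_of_app _ _ (N := k + 1 + k') (by omega) le_rfl fun n => ?_
  simp [← Functor.map_comp]

lemma mk_preComp_of_stepRel_left {X Y Z : WSeq W} (a a' : Pre X Y) (b : Pre Y Z)
    (h : stepRel X Y a a') :
    Quot.mk (stepRel X Z) (preComp a b) = Quot.mk (stepRel X Z) (preComp a' b) := by
  obtain ⟨k', φ'⟩ := a
  obtain ⟨k, φ⟩ := b
  subst h
  dsimp only [preComp]
  refine mk_eq_mk_of_app _ _ (N := k + (k' + 1)) (by omega) le_rfl fun n => ?_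
  simp [← Functor.map_comp]

lemma mk_preComp_assoc {X Y Z T : WSeq W} (a : Pre X Y) (b : Pre Y Z) (c : Pre Z T) :
    Quot.mk (stepRel X T) (preComp (preComp a b) c) =
      Quot.mk (stepRel X T) (preComp a (preComp b c)) := by
  obtain ⟨k₁, φ₁⟩ := a
  obtain ⟨k₂, φ₂⟩ := b
  obtain ⟨k₃, φ₃⟩ := c
  dsimp only [preComp]
  refine mk_eq_mk_of_app _ _ (N := k₃ + k₂ + k₁) (by omega) (by omega) fun n => ?_
  simp [← Functor.map_comp]

lemma mk_id_preComp {X Y : WSeq W} (b : Pre X Y) :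
    Quot.mk (stepRel X Y) (preComp ⟨0, 𝟙 X⟩ b) = Quot.mk (stepRel X Y) b := by
  obtain ⟨k, φ⟩ := b
  refine mk_eq_mk_of_app _ _ (N := k) le_rfl le_rfl fun n => ?_
  erw [WSeq.comp_app, WSeq.id_app, shMap_app]
  simp

lemma mk_preComp_id {X Y : WSeq W} (a : Pre X Y) :
    Quot.mk (stepRel X Y) (preComp a ⟨0, 𝟙 Y⟩) = Quot.mk (stepRel X Y) a := by
  obtain ⟨k, φ⟩ := a
  dsimp only [preComp]
  refine mk_eq_mk_of_app _ _ (N := k) (by omega) le_rfl fun n => ?_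
  erw [WSeq.comp_app, shMap_app, WSeq.id_app]
  simp [← Functor.map_comp]

def compSH {X Y Z : WSeq W} (f : SH X Y) (g : SH Y Z) : SH X Z :=
  Quot.lift₂ (fun a b => Quot.mk _ (preComp a b)) mk_preComp_of_stepRel_right
    mk_preComp_of_stepRel_left f g

lemma compSH_assoc {X Y Z T : WSeq W} (f : SH X Y) (g : SH Y Z) (h : SH Z T) :
    compSH (compSH f g) h = compSH f (compSH g h) := by
  induction f using Quot.ind
  induction g using Quot.ind
  induction h using Quot.ind
  exact mk_preComp_assoc _ _ _

lemma lmk_id_compSH {X Y : WSeq W} (f : SH X Y) : compSH (lmk (𝟙 X)) f = f := by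
  induction f using Quot.ind
  exact mk_id_preComp _

lemma compSH_lmk_id {X Y : WSeq W} (f : SH X Y) : compSH f (lmk (𝟙 Y)) = f := by
  induction f using Quot.ind
  exact mk_preComp_id _

lemma lmk_comp {X Y Z : WSeq W} (φ : X ⟶ Y) (ψ : Y ⟶ Z) :
    lmk (φ ≫ ψ) = compSH (lmk φ) (lmk ψ) :=
  mk_eq_mk_of_app _ _ le_rfl le_rfl fun n => by
    erw [WSeq.comp_app, WSeq.comp_app, shMap_app]
    simp

lemma mk_compSH_lmk_vpow {X Y : WSeq W} (k : ℕ) (φ : X ⟶ shObj k Y) :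
    compSH (Quot.mk (stepRel X Y) ⟨k, φ⟩) (lmk (vpow k Y)) = lmk φ :=
  mk_eq_mk_of_app _ _ (N := k) (by simp) k.zero_le fun n => by simp [← Functor.map_comp]

lemma lmk_vpow_compSH_mk_id (X : WSeq W) :
    compSH (lmk (vpow 1 X)) (Quot.mk (stepRel (shObj 1 X) X) ⟨1, 𝟙 (shObj 1 X)⟩) =
      lmk (𝟙 X) :=
  mk_eq_mk_of_app _ _ (N := 1) le_rfl (by simp) fun n => by simp

lemma mk_id_compSH_lmk_vpow (X : WSeq W) :
    compSH (Quot.mk (stepRel (shObj 1 X) X) ⟨1, 𝟙 (shObj 1 X)⟩) (lmk (vpow 1 X)) =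
      lmk (𝟙 (shObj 1 X)) :=
  mk_eq_mk_of_app _ _ (N := 1) le_rfl (by simp) fun n => by simp

section Localization

variable {D : Type u₂} [Category.{v₂} D] (G : WSeq W ⥤ D)

lemma map_vpow_zero (X : WSeq W) : G.map (vpow 0 X) = 𝟙 (G.obj X) := by
  rw [vpow_zero]
  exact G.map_id X

lemma isIso_map_vpow (hG : ∀ X, IsIso (G.map (vpow 1 X))) (k : ℕ) (X : WSeq W) :
    IsIso (G.map (vpow k X)) := by
  induction k generalizing X with
  | zero => rw [map_vpow_zero]; exact IsIso.id _
  | succ k ih => rw [vpow_succ, G.map_comp]; infer_instance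

variable [∀ k X, IsIso (G.map (vpow k X))]

noncomputable def liftSH {X Y : WSeq W} : SH X Y → (G.obj X ⟶ G.obj Y) :=
  Quot.lift (fun a => G.map a.2 ≫ inv (G.map (vpow a.1 Y))) fun ⟨k, φ⟩ _ h => by
    subst h
    dsimp only
    rw [G.map_comp, IsIso.eq_comp_inv, ← vpow_comp_vstep, G.map_comp, Category.assoc,
      IsIso.inv_hom_id_assoc]

lemma liftSH_lmk {X Y : WSeq W} (φ : X ⟶ Y) : liftSH G (lmk φ) = G.map φ := by
  rw [liftSH, lmk]
  dsimp only
  rw [IsIso.comp_inv_eq, map_vpow_zero]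
  exact (Category.comp_id _).symm

lemma liftSH_compSH {X Y Z : WSeq W} (f : SH X Y) (g : SH Y Z) :
    liftSH G (compSH f g) = liftSH G f ≫ liftSH G g := by
  induction f using Quot.ind with | _ a => ?_
  induction g using Quot.ind with | _ b => ?_
  obtain ⟨k', φ'⟩ := a
  obtain ⟨k, φ⟩ := b
  have hsq : G.map (vpow k' Y) ≫ G.map (shMap k' φ) =
      G.map φ ≫ G.map (vOfLE (k.le_add_right k') Z) := by
    rw [← G.map_comp, ← G.map_comp, comp_vOfLE_eq_vpow_comp_shMap]
  have htri : G.map (vpow k Z) ≫ G.map (vOfLE (k.le_add_right k') Z) =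
      G.map (vpow (k + k') Z) := by
    rw [← G.map_comp, vpow_comp_vOfLE]
  change G.map (φ' ≫ shMap k' φ) ≫ inv (G.map (vpow (k + k') Z)) =
    (G.map φ' ≫ inv (G.map (vpow k' Y))) ≫ G.map φ ≫ inv (G.map (vpow k Z))
  rw [G.map_comp, Category.assoc, Category.assoc]
  congr 1
  rw [IsIso.comp_inv_eq, Category.assoc, Category.assoc, IsIso.eq_inv_comp, hsq, ← htri,
    IsIso.inv_hom_id_assoc]

lemma eq_liftSH {X Y : WSeq W} (H : ∀ X Y : WSeq W, SH X Y → (G.obj X ⟶ G.obj Y))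
    (hcomp : ∀ (X Y Z : WSeq W) (f : SH X Y) (g : SH Y Z),
      H X Z (compSH f g) = H X Y f ≫ H Y Z g)
    (hlmk : ∀ (X Y : WSeq W) (φ : X ⟶ Y), H X Y (lmk φ) = G.map φ) (f : SH X Y) :
    H X Y f = liftSH G f := by
  induction f using Quot.ind with | _ a => ?_
  obtain ⟨k, φ⟩ := a
  have hfrac := hcomp _ _ _ (Quot.mk _ ⟨k, φ⟩) (lmk (vpow k Y))
  rw [mk_compSH_lmk_vpow, hlmk, hlmk] at hfrac
  change _ = G.map φ ≫ inv (G.map (vpow k Y))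
  rw [IsIso.eq_comp_inv, hfrac]

end Localization

theorem statement3 {C : Type u} [Category.{v} C] (W : MorphismProperty C) :
    ∃ comp : ∀ (X Y Z : WSeq W), SH X Y → SH Y Z → SH X Z,
      -- (i) the composition is well defined and satisfies the defining formula
      (∀ (X Y Z : WSeq W) (a : Pre X Y) (b : Pre Y Z),
        comp X Y Z (Quot.mk _ a) (Quot.mk _ b) = Quot.mk _ (preComp a b)) ∧
      -- associativity
      (∀ (X Y Z T : WSeq W) (f : SH X Y) (g : SH Y Z) (h : SH Z T),
        comp X Z T (comp X Y Z f g) h = comp X Y T f (comp Y Z T g h)) ∧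
      -- unitality, with units `ℓ_V(𝟙) = [0, 𝟙]`
      (∀ (X Y : WSeq W) (f : SH X Y), comp X X Y (lmk (𝟙 X)) f = f) ∧
      (∀ (X Y : WSeq W) (f : SH X Y), comp X Y Y f (lmk (𝟙 Y)) = f) ∧
      -- (ii) `ℓ_V` (identity on objects, `φ ↦ [0,φ]`) is functorial …
      (∀ (X Y Z : WSeq W) (φ : X ⟶ Y) (ψ : Y ⟶ Z),
        lmk (φ ≫ ψ) = comp X Y Z (lmk φ) (lmk ψ)) ∧
      -- … it inverts every morphism in `V = { v_C }` …
      (∀ X : WSeq W, ∃ w : SH (shObj 1 X) X,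
        comp X (shObj 1 X) X (lmk (vpow 1 X)) w = lmk (𝟙 X) ∧
        comp (shObj 1 X) X (shObj 1 X) w (lmk (vpow 1 X)) = lmk (𝟙 (shObj 1 X))) ∧
      -- … and it exhibits the shift category as the localization at `V`:
      -- for every category `D`, "functors" out of the shift category correspond, by
      -- precomposition with `ℓ_V`, to functors `Fun^W(ℕ,C) ⥤ D` inverting `V`.
      (∀ (D : Type u₂) (_ : Category.{v₂} D) (G : WSeq W ⥤ D),
        (∀ X : WSeq W, IsIso (G.map (vpow 1 X))) →
        ∃! Hmap : ∀ (X Y : WSeq W), SH X Y → (G.obj X ⟶ G.obj Y),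
          (∀ X : WSeq W, Hmap X X (lmk (𝟙 X)) = 𝟙 (G.obj X)) ∧
          (∀ (X Y Z : WSeq W) (f : SH X Y) (g : SH Y Z),
            Hmap X Z (comp X Y Z f g) = Hmap X Y f ≫ Hmap Y Z g) ∧
          (∀ (X Y : WSeq W) (φ : X ⟶ Y), Hmap X Y (lmk φ) = G.map φ)) := by
  refine ⟨fun _ _ _ => compSH, fun _ _ _ _ _ => rfl, fun _ _ _ _ => compSH_assoc,
    fun _ _ => lmk_id_compSH, fun _ _ => compSH_lmk_id, fun _ _ _ => lmk_comp,
    fun X => ⟨_, lmk_vpow_compSH_mk_id X, mk_id_compSH_lmk_vpow X⟩, ?_⟩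
  intro D _ G hG
  have := isIso_map_vpow G hG
  refine ⟨fun _ _ => liftSH G, ⟨fun X => (liftSH_lmk G (𝟙 X)).trans (G.map_id X),
    fun _ _ _ => liftSH_compSH G, fun _ _ => liftSH_lmk G⟩, ?_⟩
  rintro H ⟨-, hcomp, hlmk⟩
  funext X Y f
  exact eq_liftSH G H hcomp hlmk f

end ShiftCat
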